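/- arXiv:2205.13169 — 3 statements merged into one kernel-verified Lean document; each statement's English description precedes it below -/
import Mathlib

section
/- Let 𝒫 be a finite set of parties, 𝒵 a family of subsets of 𝒫, and k ≥ 1. If 𝒵 satisfies the Q^(k+1)(𝒫, 𝒵) condition, then the sharing specification 𝕊 = {𝒫 \ Z : Z ∈ 𝒵} satisfies the Q^(k)(𝕊, 𝒵) condition: for every S ∈ 𝕊 and every choice of k sets Z₁, …, Z_k ∈ 𝒵, S ⊄ Z₁ ∪ ⋯ ∪ Z_k. In particular, if 𝒵 satisfies Q^(4)(𝒫, 𝒵) then 𝕊 satisfies Q^(3)(𝕊, 𝒵), and if 𝒵 satisfies Q^(3)(𝒫, 𝒵) then 𝕊 satisfies Q^(2)(𝕊, 𝒵). -/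
/-- The `Q^(k)(X, 𝒵)` condition: no `k` sets from `𝒵` (repetitions allowed) cover `X`. -/
def QCond {P : Type*} (k : ℕ) (X : Set P) (𝒵 : Set (Set P)) : Prop :=
  ∀ f : Fin k → Set P, (∀ i, f i ∈ 𝒵) → ¬ X ⊆ ⋃ i, f i

theorem stmt_1 {P : Type*} [Fintype P] (𝒵 : Set (Set P)) (k : ℕ) (hk : 1 ≤ k)
    (hQ : QCond (k + 1) (Set.univ : Set P) 𝒵) :
    ∀ S ∈ (fun Z => (Set.univ : Set P) \ Z) '' 𝒵, QCond k S 𝒵 := by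
  rintro S ⟨Z, hZ, rfl⟩ f hf hsub
  apply hQ (Fin.cons Z f) (by
    intro i
    refine Fin.cases ?_ ?_ i
    · exact hZ
    · exact hf)
  intro x _
  by_cases hx : x ∈ Z
  · exact Set.mem_iUnion.2 ⟨0, hx⟩
  · obtain ⟨i, hi⟩ := Set.mem_iUnion.1 (hsub ⟨trivial, hx⟩)
    exact Set.mem_iUnion.2 ⟨i.succ, hi⟩
end

section
/- Let 𝒫 be a finite set of parties and 𝒵 a family of subsets of 𝒫 satisfying the Q^(4)(𝒫, 𝒵) condition. Let Z₀, Z* ∈ 𝒵 and set S = 𝒫 \ Z₀. Let C ⊆ S be a core set with S \ C ∈ 𝒵, and let C' ⊆ C with C \ C' ∈ 𝒵. Then C' is not contained in Z*; equivalently, C' contains at least one party outside Z* (an honest party). (This is the fact underlying share-filtering in the perfectly-secure verifiable secret sharing protocol.) -/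
theorem stmt_7 {P : Type*} [Fintype P] (𝒵 : Set (Set P))
    (hQ : QCond 4 (Set.univ : Set P) 𝒵)
    (Z₀ Zstar : Set P) (hZ₀ : Z₀ ∈ 𝒵) (hZstar : Zstar ∈ 𝒵)
    (C C' : Set P) (hC : C ⊆ Set.univ \ Z₀) (hSC : (Set.univ \ Z₀) \ C ∈ 𝒵)
    (hC' : C' ⊆ C) (hCC' : C \ C' ∈ 𝒵) :
    ¬ (C' ⊆ Zstar) := by
  intro hsub
  apply hQ ![Z₀, (Set.univ \ Z₀) \ C, C \ C', Zstar]
  · intro i; fin_cases i <;> simpa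
  · intro x _
    simp only [Set.mem_iUnion]
    by_cases h0 : x ∈ Z₀
    · exact ⟨0, h0⟩
    by_cases h1 : x ∈ C
    · by_cases h2 : x ∈ C'
      · exact ⟨3, hsub h2⟩
      · exact ⟨2, h1, h2⟩
    · exact ⟨1, ⟨trivial, h0⟩, h1⟩
end

section
/- Let 𝔽 be a field, h a positive integer, A a finite set of parties, and a, b, b' : Fin h → 𝔽. Let T : A → Finset (Fin h × Fin h) and T' : A → Finset (Fin h × Fin h) each be families of pairwise disjoint sets whose union is all of Fin h × Fin h. Let c, c' : A → 𝔽, let r ∈ 𝔽, and define a_Σ = ∑_p a p, b_Σ = ∑_q b q, b'_Σ = ∑_q b' q, c_Σ = ∑_{j ∈ A} c j, c'_Σ = ∑_{j ∈ A} c' j, e = r*b_Σ + b'_Σ, and d = e*a_Σ − r*c_Σ − c'_Σ. If d ≠ 0, then there exists j ∈ A such that r * (c j) + (c' j) ≠ r * ∑_{(p,q) ∈ T j} a p * b q + ∑_{(p,q) ∈ T' j} a p * b' q; i.e., some summand-sharing party shared an incorrect summand-sum. -/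
theorem stmt_19 {𝔽 : Type*} [Field 𝔽] (h : ℕ) (hh : 0 < h)
    {A : Type*} [Fintype A] (a b b' : Fin h → 𝔽)
    (T T' : A → Finset (Fin h × Fin h))
    (hTdisj : ∀ i j, i ≠ j → Disjoint (T i) (T j))
    (hTcover : Finset.univ.biUnion T = (Finset.univ : Finset (Fin h × Fin h)))
    (hT'disj : ∀ i j, i ≠ j → Disjoint (T' i) (T' j))
    (hT'cover : Finset.univ.biUnion T' = (Finset.univ : Finset (Fin h × Fin h)))
    (c c' : A → 𝔽) (r : 𝔽)
    (hd : (r * (∑ q, b q) + (∑ q, b' q)) * (∑ p, a p)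
            - r * (∑ j, c j) - (∑ j, c' j) ≠ 0) :
    ∃ j : A, r * c j + c' j ≠
      r * (∑ pq ∈ T j, a pq.1 * b pq.2) + (∑ pq ∈ T' j, a pq.1 * b' pq.2) := by
  by_contra hcon
  push_neg at hcon
  apply hd
  have hT : ∑ j : A, ∑ pq ∈ T j, a pq.1 * b pq.2
      = ∑ pq : Fin h × Fin h, a pq.1 * b pq.2 := by
    rw [← hTcover, Finset.sum_biUnion]
    intro i _ j _ hij
    exact hTdisj i j hij
  have hT' : ∑ j : A, ∑ pq ∈ T' j, a pq.1 * b' pq.2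
      = ∑ pq : Fin h × Fin h, a pq.1 * b' pq.2 := by
    rw [← hT'cover, Finset.sum_biUnion]
    intro i _ j _ hij
    exact hT'disj i j hij
  have hsum : ∑ j : A, (r * c j + c' j)
      = ∑ j : A, (r * (∑ pq ∈ T j, a pq.1 * b pq.2)
          + (∑ pq ∈ T' j, a pq.1 * b' pq.2)) :=
    Finset.sum_congr rfl fun j _ => hcon j
  simp only [Finset.sum_add_distrib, ← Finset.mul_sum] at hsum
  rw [hT, hT'] at hsum
  have h1 : (∑ pq : Fin h × Fin h, a pq.1 * b pq.2)
      = (∑ p, a p) * (∑ q, b q) := by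
    rw [Finset.sum_mul_sum, ← Finset.univ_product_univ, Finset.sum_product]
  have h2 : (∑ pq : Fin h × Fin h, a pq.1 * b' pq.2)
      = (∑ p, a p) * (∑ q, b' q) := by
    rw [Finset.sum_mul_sum, ← Finset.univ_product_univ, Finset.sum_product]
  rw [h1, h2] at hsum
  ring_nf
  ring_nf at hsum
  linear_combination -hsum
end
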